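/- Let ((ζ_i, γ_i))_{i≥1} be an i.i.d. sequence of random pairs on a probability space, with values almost surely in [0, ζ̄] × [γ̲, γ̄] where 0 ≤ ζ̄ < 1 and 1 < γ̲ ≤ γ̄ < ∞. Set M_i := M(ζ_i, γ_i) and define the backward products (L_k, R_k) := (1,1)·M_{k−1}·M_{k−2}⋯M_1 for k ≥ 2. Then almost surely the limit lim_{k→∞} R_k / L_k exists and lies in [0,1]. -/

import Mathlib

open Matrix Filter MeasureTheory ProbabilityTheory

/-- The transfer matrix `M(ζ,γ) = (1/((1+ζ)γ)) · [[γ², ζγ²],[ζ, 1]]`. -/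
noncomputable def Mmat (ζ γ : ℝ) : Matrix (Fin 2) (Fin 2) ℝ :=
  (((1 + ζ) * γ)⁻¹) • !![γ ^ 2, ζ * γ ^ 2; ζ, 1]

/-- The backward product `M_{k-1} · M_{k-2} ⋯ M_1`. -/
noncomputable def backwardProd (ζ γ : ℕ → ℝ) (k : ℕ) : Matrix (Fin 2) (Fin 2) ℝ :=
  ((List.range (k - 1)).map (fun i => Mmat (ζ (k - 1 - i)) (γ (k - 1 - i)))).prod

/-- `L_k` : first entry of `(1,1) · M_{k-1} ⋯ M_1`. -/
noncomputable def Lback (ζ γ : ℕ → ℝ) (k : ℕ) : ℝ :=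
  Matrix.vecMul ![1, 1] (backwardProd ζ γ k) 0

/-- `R_k` : second entry of `(1,1) · M_{k-1} ⋯ M_1`. -/
noncomputable def Rback (ζ γ : ℕ → ℝ) (k : ℕ) : ℝ :=
  Matrix.vecMul ![1, 1] (backwardProd ζ γ k) 1

lemma bp_succ (ζ γ : ℕ → ℝ) (k : ℕ) (hk : 1 ≤ k) :
    backwardProd ζ γ (k+1) = Mmat (ζ k) (γ k) * backwardProd ζ γ k := by
  cases k with
  | zero => omega
  | succ m =>
    simp only [backwardProd, Nat.add_sub_cancel, List.range_succ_eq_map, List.map_cons,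
      List.map_map, List.prod_cons, Nat.sub_zero]
    congr 1
    apply congrArg
    apply List.map_congr_left
    intro i _
    simp [Function.comp, Nat.succ_sub_succ]

lemma bp_one (ζ γ : ℕ → ℝ) : backwardProd ζ γ 1 = 1 := by simp [backwardProd]
lemma bp_zero (ζ γ : ℕ → ℝ) : backwardProd ζ γ 0 = 1 := by simp [backwardProd]

lemma vecMul_one_one (Q : Matrix (Fin 2) (Fin 2) ℝ) (j : Fin 2) :
    Matrix.vecMul ![1,1] Q j = Q 0 j + Q 1 j := by
  simp [Matrix.vecMul, dotProduct, Fin.sum_univ_two]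

lemma mul_entry (A P : Matrix (Fin 2) (Fin 2) ℝ) (i j : Fin 2) :
    (A * P) i j = A i 0 * P 0 j + A i 1 * P 1 j := by
  simp [Matrix.mul_apply, Fin.sum_univ_two]

def Good (P : Matrix (Fin 2) (Fin 2) ℝ) : Prop :=
  0 ≤ P 0 0 ∧ 0 ≤ P 0 1 ∧ 0 ≤ P 1 0 ∧ 0 ≤ P 1 1 ∧ 0 < P 0 0 + P 1 0 ∧ 0 ≤ P.det

lemma good_one : Good (1 : Matrix (Fin 2) (Fin 2) ℝ) := by
  refine ⟨?_, ?_, ?_, ?_, ?_, ?_⟩ <;> simp [Matrix.one_apply]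

lemma step (z g : ℝ) (hz0 : 0 ≤ z) (hz1 : z ≤ 1) (hg : 1 ≤ g)
    (P : Matrix (Fin 2) (Fin 2) ℝ) (h : Good P) :
    Good (Mmat z g * P) ∧
    (Matrix.vecMul ![1,1] (Mmat z g * P) 1) * (P 0 0 + P 1 0)
      ≤ (Matrix.vecMul ![1,1] (Mmat z g * P) 0) * (P 0 1 + P 1 1) := by
  obtain ⟨h00, h01, h10, h11, hL, hdet⟩ := h
  have hg0 : (0:ℝ) < g := lt_of_lt_of_le one_pos hg
  have hc : 0 < ((1 + z) * g)⁻¹ := by positivity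
  have hM00 : Mmat z g 0 0 = ((1 + z) * g)⁻¹ * g ^ 2 := by simp [Mmat]
  have hM01 : Mmat z g 0 1 = ((1 + z) * g)⁻¹ * (z * g ^ 2) := by simp [Mmat]
  have hM10 : Mmat z g 1 0 = ((1 + z) * g)⁻¹ * z := by simp [Mmat]
  have hM11 : Mmat z g 1 1 = ((1 + z) * g)⁻¹ * 1 := by simp [Mmat]
  have hdP : P.det = P 0 0 * P 1 1 - P 0 1 * P 1 0 := Matrix.det_fin_two P
  rw [hdP] at hdet
  set c := ((1 + z) * g)⁻¹ with hcdef
  constructor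
  · refine ⟨?_, ?_, ?_, ?_, ?_, ?_⟩
    · rw [mul_entry, hM00, hM01]; positivity
    · rw [mul_entry, hM00, hM01]; positivity
    · rw [mul_entry, hM10, hM11]; positivity
    · rw [mul_entry, hM10, hM11]; positivity
    · rw [mul_entry, mul_entry, hM00, hM01, hM10, hM11]
      have hg2 : 1 ≤ g^2 := one_le_pow₀ hg
      nlinarith [mul_pos hc hL, mul_nonneg (mul_nonneg hc.le h00) (sub_nonneg.2 hg2),
        mul_nonneg hc.le (mul_nonneg hz0 (mul_nonneg (pow_nonneg hg0.le 2) h10)),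
        mul_nonneg hc.le (mul_nonneg hz0 h00)]
    · have h1 : 0 ≤ g^2 - z * g^2 * z := by
        nlinarith [mul_nonneg (mul_nonneg (sq_nonneg g) (sub_nonneg.2 hz1))
          (by linarith : (0:ℝ) ≤ 1 + z)]
      have hdM : 0 ≤ (Mmat z g).det := by
        rw [Matrix.det_fin_two, hM00, hM11, hM01, hM10]
        nlinarith [mul_nonneg (mul_pos hc hc).le h1]
      rw [Matrix.det_mul, hdP]
      exact mul_nonneg hdM hdet
  · rw [vecMul_one_one, vecMul_one_one, mul_entry, mul_entry, mul_entry, mul_entry,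
      hM00, hM01, hM10, hM11]
    nlinarith [mul_nonneg (mul_nonneg hc.le (mul_nonneg (sub_nonneg.2 hz1)
      (sub_nonneg.2 (one_le_pow₀ hg (n := 2))))) hdet]

lemma good_bp (ζ γ : ℕ → ℝ) (h : ∀ i, 1 ≤ i → 0 ≤ ζ i ∧ ζ i ≤ 1 ∧ 1 ≤ γ i) :
    ∀ k, Good (backwardProd ζ γ k) := by
  intro k
  induction k with
  | zero => rw [bp_zero]; exact good_one
  | succ m ih =>
    rcases Nat.eq_zero_or_pos m with hm | hm
    · subst hm; rw [bp_one]; exact good_one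
    · rw [bp_succ _ _ _ hm]
      obtain ⟨hz0, hz1, hg⟩ := h m hm
      exact (step _ _ hz0 hz1 hg _ ih).1

lemma ratio_mono (ζ γ : ℕ → ℝ) (h : ∀ i, 1 ≤ i → 0 ≤ ζ i ∧ ζ i ≤ 1 ∧ 1 ≤ γ i) (k : ℕ) :
    Rback ζ γ (k+1) / Lback ζ γ (k+1) ≤ Rback ζ γ k / Lback ζ γ k := by
  rcases Nat.eq_zero_or_pos k with hk | hk
  · subst hk
    simp [Rback, Lback, bp_zero, bp_one]
  · obtain ⟨hz0, hz1, hg⟩ := h k hk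
    have hGP := good_bp ζ γ h k
    have hstep := step _ _ hz0 hz1 hg _ hGP
    have hGP' := hstep.1
    have hL : 0 < Lback ζ γ k := by
      rw [Lback, vecMul_one_one]; exact hGP.2.2.2.2.1
    have hL' : 0 < Lback ζ γ (k+1) := by
      rw [Lback, vecMul_one_one, bp_succ _ _ _ hk]; exact hGP'.2.2.2.2.1
    rw [div_le_div_iff₀ hL' hL]
    have e1 : Rback ζ γ (k+1)
        = Matrix.vecMul ![1,1] (Mmat (ζ k) (γ k) * backwardProd ζ γ k) 1 := by
      rw [Rback, bp_succ _ _ _ hk]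
    have e2 : Lback ζ γ (k+1)
        = Matrix.vecMul ![1,1] (Mmat (ζ k) (γ k) * backwardProd ζ γ k) 0 := by
      rw [Lback, bp_succ _ _ _ hk]
    have e3 : Lback ζ γ k = backwardProd ζ γ k 0 0 + backwardProd ζ γ k 1 0 := by
      rw [Lback, vecMul_one_one]
    have e4 : Rback ζ γ k = backwardProd ζ γ k 0 1 + backwardProd ζ γ k 1 1 := by
      rw [Rback, vecMul_one_one]
    rw [e1, e2, e3, e4]
    linarith [hstep.2]

lemma ratio_nonneg (ζ γ : ℕ → ℝ) (h : ∀ i, 1 ≤ i → 0 ≤ ζ i ∧ ζ i ≤ 1 ∧ 1 ≤ γ i) (k : ℕ) :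
    0 ≤ Rback ζ γ k / Lback ζ γ k := by
  have hG := good_bp ζ γ h k
  apply div_nonneg
  · rw [Rback, vecMul_one_one]; exact add_nonneg hG.2.1 hG.2.2.2.1
  · rw [Lback, vecMul_one_one]; exact hG.2.2.2.2.1.le

lemma ratio_zero (ζ γ : ℕ → ℝ) : Rback ζ γ 0 / Lback ζ γ 0 = 1 := by
  simp [Rback, Lback, bp_zero]

lemma ratio_tendsto (ζ γ : ℕ → ℝ) (h : ∀ i, 1 ≤ i → 0 ≤ ζ i ∧ ζ i ≤ 1 ∧ 1 ≤ γ i) :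
    ∃ z ∈ Set.Icc (0:ℝ) 1,
      Tendsto (fun k => Rback ζ γ k / Lback ζ γ k) atTop (nhds z) := by
  set r := fun k => Rback ζ γ k / Lback ζ γ k with hr
  have hanti : Antitone r := antitone_nat_of_succ_le (ratio_mono ζ γ h)
  have hbdd : BddBelow (Set.range r) := ⟨0, by rintro x ⟨k, rfl⟩; exact ratio_nonneg ζ γ h k⟩
  refine ⟨⨅ k, r k, ⟨le_ciInf fun k => ratio_nonneg ζ γ h k, ?_⟩,
    tendsto_atTop_ciInf hanti hbdd⟩
  calc ⨅ k, r k ≤ r 0 := ciInf_le hbdd 0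
    _ = 1 := ratio_zero ζ γ

/-- Let `((ζ_i, γ_i))_{i≥1}` be an i.i.d. sequence of random pairs with values a.s. in
`[0, ζ̄] × [γ̲, γ̄]`, where `0 ≤ ζ̄ < 1 < γ̲ ≤ γ̄ < ∞`.  With
`(L_k, R_k) = (1,1)·M_{k−1}⋯M_1`, almost surely `lim_{k→∞} R_k/L_k` exists and lies in
`[0,1]`. -/
theorem stmt3 {Ω : Type*} [MeasurableSpace Ω] (μ : Measure Ω) [IsProbabilityMeasure μ]
    (ζ γ : ℕ → Ω → ℝ) (ζbar γlow γbar : ℝ)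
    (hζbar0 : 0 ≤ ζbar) (hζbar1 : ζbar < 1) (hγlow : 1 < γlow) (hγord : γlow ≤ γbar)
    (hmeas : ∀ i, Measurable (fun ω => (ζ i ω, γ i ω)))
    (hindep : iIndepFun
      (fun i ω => (ζ (i + 1) ω, γ (i + 1) ω)) μ)
    (hident : ∀ i j, 1 ≤ i → 1 ≤ j →
      Measure.map (fun ω => (ζ i ω, γ i ω)) μ = Measure.map (fun ω => (ζ j ω, γ j ω)) μ)
    (hbdd : ∀ i, 1 ≤ i → ∀ᵐ ω ∂μ,
      ζ i ω ∈ Set.Icc 0 ζbar ∧ γ i ω ∈ Set.Icc γlow γbar) :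
    ∀ᵐ ω ∂μ, ∃ z ∈ Set.Icc (0 : ℝ) 1,
      Tendsto (fun k => Rback (fun i => ζ i ω) (fun i => γ i ω) k /
        Lback (fun i => ζ i ω) (fun i => γ i ω) k) atTop (nhds z) := by
  have hae : ∀ᵐ ω ∂μ, ∀ i, 1 ≤ i →
      (ζ i ω ∈ Set.Icc 0 ζbar ∧ γ i ω ∈ Set.Icc γlow γbar) := by
    rw [MeasureTheory.ae_all_iff]
    intro i
    by_cases hi : 1 ≤ i
    · filter_upwards [hbdd i hi] with ω h _ using h
    · filter_upwards with ω h using absurd h hi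
  filter_upwards [hae] with ω hω
  apply ratio_tendsto
  intro i hi
  obtain ⟨⟨hz0, hz1⟩, ⟨hg1, _⟩⟩ := hω i hi
  exact ⟨hz0, hz1.trans hζbar1.le, hγlow.le.trans hg1⟩
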